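/- arXiv:1409.5285 — 4 statements merged into one kernel-verified Lean document; each statement's English description precedes it below -/
import Mathlib

section
/- Let 0 < α < 1/2, set γ(α) = α/(2α−1) and z(y,α) = y²(2α−1)/2, and let F(y,α) = y·M(γ(α), 3/2, z(y,α)) + [Γ(1−γ(α)) / (√(2(1−2α))·Γ(3/2−γ(α)))]·M(γ(α)−1/2, 1/2, z(y,α)). Then for every constant C ∈ ℝ the function f(y) = C·F(y,α) is twice continuously differentiable on ℝ and satisfies f''(y) − (2α−1) y f'(y) − f(y) = 0 for all y ∈ ℝ. -/
open Real Filter Polynomial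

/-- Confluent hypergeometric function of the first kind,
`M(γ,β,z) = ∑ (γ)⁽ⁿ⁾ zⁿ / ((β)⁽ⁿ⁾ n!)`. -/
noncomputable def M (γ β z : ℝ) : ℝ :=
  ∑' n : ℕ, ((ascPochhammer ℝ n).eval γ * z ^ n) /
    ((ascPochhammer ℝ n).eval β * (Nat.factorial n : ℝ))

/-- The candidate solution for `0 < α < 1/2`. -/
noncomputable def F (α y : ℝ) : ℝ :=
  y * M (α / (2 * α - 1)) (3 / 2) (y ^ 2 * (2 * α - 1) / 2) +
    Real.Gamma (1 - α / (2 * α - 1)) /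
      (Real.sqrt (2 * (1 - 2 * α)) * Real.Gamma (3 / 2 - α / (2 * α - 1))) *
    M (α / (2 * α - 1) - 1 / 2) (1 / 2) (y ^ 2 * (2 * α - 1) / 2)

/-!
Expand `F(·, α)` as a power series `∑ cₙ yⁿ`: the series `y · M(γ, 3/2, ·)` supplies the odd
coefficients and `M(γ - 1/2, 1/2, ·)` the even ones. The equation
`f'' - (2α - 1) y f' - f = 0` is equivalent to the recurrence
`(n + 2)(n + 1) cₙ₊₂ = ((2α - 1) n + 1) cₙ`, which holds in both parities because
`2 (2α - 1) γ = 2α` and `2 (2α - 1) (γ - 1/2) = 1`. The recurrence alone makes the series converge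
on all of `ℝ`, so it can be differentiated term by term.
-/

section PowerSeries

variable {a : ℕ → ℝ}

theorem summable_of_ratio_norm_add_two_eventually_le {E : Type*} [SeminormedAddCommGroup E]
    [CompleteSpace E] {f : ℕ → E} {r : ℝ} (hr : r < 1)
    (h : ∀ᶠ n in atTop, ‖f (n + 2)‖ ≤ r * ‖f n‖) : Summable f := by
  obtain ⟨N, hN⟩ := eventually_atTop.1 h
  refine .even_add_odd (summable_of_ratio_norm_eventually_le hr ?_)
    (summable_of_ratio_norm_eventually_le hr ?_) <;>
    refine eventually_atTop.2 ⟨N, fun n hn => ?_⟩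
  · simpa [mul_add] using hN (2 * n) (by omega)
  · simpa [mul_add, add_right_comm] using hN (2 * n + 1) (by omega)

theorem summable_mul_pow (ha : ∀ r, Summable fun n => |a n| * r ^ n) (y : ℝ) :
    Summable fun n => a n * y ^ n :=
  .of_norm (by simpa [abs_mul] using ha |y|)

def derivCoeff (a : ℕ → ℝ) (n : ℕ) : ℝ := (n + 1) * a (n + 1)

theorem summable_abs_derivCoeff_mul_pow (ha : ∀ r, Summable fun n => |a n| * r ^ n) (r : ℝ) :
    Summable fun n => |derivCoeff a n| * r ^ n := by
  set s := 2 * |r| + 1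
  refine .of_norm_bounded ((summable_nat_add_iff 1).2 (ha s)) fun n => ?_
  have hn : (n + 1 : ℝ) * |r| ^ n ≤ s ^ (n + 1) :=
    calc (n + 1 : ℝ) * |r| ^ n ≤ 2 ^ n * |r| ^ n := by
          gcongr; exact_mod_cast Nat.lt_two_pow_self
      _ = (2 * |r|) ^ n := (mul_pow ..).symm
      _ ≤ s ^ n := by gcongr; linarith
      _ ≤ s ^ (n + 1) := pow_le_pow_right₀ (by linarith [abs_nonneg r]) n.le_succ
  rw [derivCoeff, norm_mul, norm_pow, Real.norm_eq_abs, Real.norm_eq_abs, abs_abs, abs_mul,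
    abs_of_nonneg (by positivity : (0 : ℝ) ≤ n + 1)]
  calc (n + 1) * |a (n + 1)| * |r| ^ n = |a (n + 1)| * ((n + 1) * |r| ^ n) := by ring
    _ ≤ |a (n + 1)| * s ^ (n + 1) := by gcongr

theorem hasDerivAt_tsum_mul_pow (ha : ∀ r, Summable fun n => |a n| * r ^ n) (y : ℝ) :
    HasDerivAt (fun y => ∑' n, a n * y ^ n) (∑' n, derivCoeff a n * y ^ n) y := by
  set R := |y| + 1
  have hy : y ∈ Metric.ball (0 : ℝ) R := by simp [R]
  have hshift : HasDerivAt (fun y => ∑' n, a (n + 1) * y ^ (n + 1))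
      (∑' n, derivCoeff a n * y ^ n) y := by
    refine hasDerivAt_tsum_of_isPreconnected (g := fun n z => a (n + 1) * z ^ (n + 1))
      (g' := fun n z => derivCoeff a n * z ^ n) (summable_abs_derivCoeff_mul_pow ha R)
      Metric.isOpen_ball (convex_ball 0 R).isPreconnected (fun n z _ => ?_) (fun n z hz => ?_) hy
      ((summable_nat_add_iff 1).2 (summable_mul_pow ha y)) hy
    · refine ((hasDerivAt_pow (n + 1) z).const_mul (a (n + 1))).congr_deriv ?_
      simp only [derivCoeff, Nat.add_sub_cancel, Nat.cast_add, Nat.cast_one]; ring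
    · have hz : |z| ≤ R := by simpa using (Metric.mem_ball.1 hz).le
      rw [norm_mul, norm_pow, Real.norm_eq_abs, Real.norm_eq_abs]
      gcongr
  have hsplit : (fun y => ∑' n, a n * y ^ n) = fun y => a 0 + ∑' n, a (n + 1) * y ^ (n + 1) :=
    funext fun y => by simpa using (summable_mul_pow ha y).tsum_eq_zero_add
  simpa [hsplit] using hshift.const_add (a 0)

theorem deriv_tsum_mul_pow (ha : ∀ r, Summable fun n => |a n| * r ^ n) :
    deriv (fun y => ∑' n, a n * y ^ n) = fun y => ∑' n, derivCoeff a n * y ^ n :=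
  funext fun y => (hasDerivAt_tsum_mul_pow ha y).deriv

theorem contDiff_tsum_mul_pow (ha : ∀ r, Summable fun n => |a n| * r ^ n) (k : ℕ) :
    ContDiff ℝ k fun y => ∑' n, a n * y ^ n := by
  induction k generalizing a with
  | zero => exact contDiff_zero.2 (Differentiable.continuous fun y =>
      (hasDerivAt_tsum_mul_pow ha y).differentiableAt)
  | succ k ih =>
    rw [Nat.cast_succ, contDiff_succ_iff_deriv, deriv_tsum_mul_pow ha]
    exact ⟨fun y => (hasDerivAt_tsum_mul_pow ha y).differentiableAt, by simp,
      ih (summable_abs_derivCoeff_mul_pow ha)⟩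

theorem summable_abs_mul_pow_of_recurrence {b : ℝ}
    (hrec : ∀ n : ℕ, (n + 2) * (n + 1) * a (n + 2) = (b * n + 1) * a n) (r : ℝ) :
    Summable fun n => |a n| * r ^ n := by
  refine summable_of_ratio_norm_add_two_eventually_le (r := 1 / 2) (by norm_num) ?_
  filter_upwards [eventually_ge_atTop ⌈2 * (|b| + 1) * r ^ 2⌉₊] with n hn
  have hN : 2 * (|b| + 1) * r ^ 2 ≤ n + 2 := by
    have := (Nat.ceil_le.1 hn); linarith
  have hb : |b * n + 1| ≤ (|b| + 1) * (n + 1) := by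
    calc |b * n + 1| ≤ |b| * n + 1 := by
          simpa [abs_mul] using abs_add_le (b * n) 1
      _ ≤ (|b| + 1) * (n + 1) := by nlinarith [abs_nonneg b, (n.cast_nonneg : (0 : ℝ) ≤ n)]
  have hstep : (n + 2) * |a (n + 2)| ≤ (|b| + 1) * |a n| := by
    refine le_of_mul_le_mul_right ?_ (by positivity : (0 : ℝ) < n + 1)
    calc (n + 2) * |a (n + 2)| * (n + 1) = |(n + 2) * (n + 1) * a (n + 2)| := by
          rw [abs_mul, abs_mul, abs_of_pos (by positivity : (0 : ℝ) < n + 2),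
            abs_of_pos (by positivity : (0 : ℝ) < n + 1)]; ring
      _ = |b * n + 1| * |a n| := by rw [hrec, abs_mul]
      _ ≤ (|b| + 1) * (n + 1) * |a n| := by gcongr
      _ = (|b| + 1) * |a n| * (n + 1) := by ring
  have hratio : |a (n + 2)| * r ^ 2 ≤ 1 / 2 * |a n| := by
    refine le_of_mul_le_mul_left ?_ (by positivity : (0 : ℝ) < n + 2)
    nlinarith [abs_nonneg (a n), abs_nonneg (a (n + 2)), sq_nonneg r]
  simp only [norm_mul, norm_pow, Real.norm_eq_abs, abs_abs]
  calc |a (n + 2)| * |r| ^ (n + 2) = |a (n + 2)| * r ^ 2 * |r| ^ n := by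
        rw [pow_add, sq_abs]; ring
    _ ≤ 1 / 2 * |a n| * |r| ^ n := by gcongr
    _ = 1 / 2 * (|a n| * |r| ^ n) := by ring

theorem tsum_mul_pow_ode {b : ℝ}
    (hrec : ∀ n : ℕ, (n + 2) * (n + 1) * a (n + 2) = (b * n + 1) * a n) (y : ℝ) :
    deriv (deriv fun y => ∑' n, a n * y ^ n) y - b * y * deriv (fun y => ∑' n, a n * y ^ n) y -
      ∑' n, a n * y ^ n = 0 := by
  have ha := summable_abs_mul_pow_of_recurrence hrec
  have ha' := summable_abs_derivCoeff_mul_pow ha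
  rw [deriv_tsum_mul_pow ha, deriv_tsum_mul_pow ha']
  have hshift : Summable fun n => ((n + 1 : ℕ) : ℝ) * a (n + 1) * y ^ (n + 1) :=
    ((summable_mul_pow ha' y).mul_left y).congr fun n => by
      simp only [derivCoeff, Nat.cast_succ]; ring
  have hEuler : y * ∑' n, derivCoeff a n * y ^ n = ∑' n, n * a n * y ^ n := by
    rw [tsum_eq_zero_add' (f := fun n : ℕ => (n : ℝ) * a n * y ^ n) hshift, ← tsum_mul_left]
    simp only [CharP.cast_eq_zero, zero_mul, zero_add, derivCoeff, Nat.cast_succ]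
    exact tsum_congr fun n => by ring
  have hEulerSum : Summable fun n : ℕ => (n : ℝ) * a n * y ^ n :=
    (summable_nat_add_iff (f := fun n : ℕ => (n : ℝ) * a n * y ^ n) 1).1 hshift
  have hsum := (((summable_mul_pow (summable_abs_derivCoeff_mul_pow ha') y).hasSum).sub
    (hEulerSum.hasSum.mul_left b)).sub (summable_mul_pow ha y).hasSum
  have hterms : ∀ n : ℕ, derivCoeff (derivCoeff a) n * y ^ n - b * (n * a n * y ^ n) -
      a n * y ^ n = 0 := fun n => by
    simp only [derivCoeff, Nat.cast_succ]
    linear_combination y ^ n * hrec n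
  rw [funext hterms] at hsum
  linear_combination hsum.unique hasSum_zero - b * hEuler

end PowerSeries

noncomputable def kummerCoeff (γ β : ℝ) (n : ℕ) : ℝ :=
  (ascPochhammer ℝ n).eval γ / ((ascPochhammer ℝ n).eval β * n.factorial)

theorem M_eq_tsum_kummerCoeff_mul_pow (γ β z : ℝ) :
    M γ β z = ∑' n, kummerCoeff γ β n * z ^ n :=
  tsum_congr fun n => by rw [kummerCoeff, div_mul_eq_mul_div]

theorem kummerCoeff_succ (γ β : ℝ) (n : ℕ) :
    kummerCoeff γ β (n + 1) = kummerCoeff γ β n * ((γ + n) / ((β + n) * (n + 1))) := by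
  rw [kummerCoeff, kummerCoeff, ascPochhammer_succ_eval, ascPochhammer_succ_eval,
    Nat.factorial_succ, div_mul_div_comm]
  congr 1
  push_cast
  ring

noncomputable def solutionCoeff (α A B : ℝ) (n : ℕ) : ℝ :=
  ((2 * α - 1) / 2) ^ (n / 2) *
    if Even n then B * kummerCoeff (α / (2 * α - 1) - 1 / 2) (1 / 2) (n / 2)
    else A * kummerCoeff (α / (2 * α - 1)) (3 / 2) (n / 2)

theorem solutionCoeff_two_mul (α A B : ℝ) (k : ℕ) :
    solutionCoeff α A B (2 * k) =
      ((2 * α - 1) / 2) ^ k * (B * kummerCoeff (α / (2 * α - 1) - 1 / 2) (1 / 2) k) := by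
  simp [solutionCoeff]

theorem solutionCoeff_two_mul_add_one (α A B : ℝ) (k : ℕ) :
    solutionCoeff α A B (2 * k + 1) =
      ((2 * α - 1) / 2) ^ k * (A * kummerCoeff (α / (2 * α - 1)) (3 / 2) k) := by
  simp [solutionCoeff, Nat.add_div_of_dvd_right]

theorem solutionCoeff_recurrence {α : ℝ} (hα : 2 * α - 1 ≠ 0) (A B : ℝ) (n : ℕ) :
    (n + 2) * (n + 1) * solutionCoeff α A B (n + 2) =
      ((2 * α - 1) * n + 1) * solutionCoeff α A B n := by
  obtain ⟨k, rfl | rfl⟩ := n.even_or_odd'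
  · rw [show 2 * k + 2 = 2 * (k + 1) by ring, solutionCoeff_two_mul, solutionCoeff_two_mul,
      kummerCoeff_succ]
    push_cast
    field_simp
    ring
  · rw [show 2 * k + 1 + 2 = 2 * (k + 1) + 1 by ring, solutionCoeff_two_mul_add_one,
      solutionCoeff_two_mul_add_one, kummerCoeff_succ]
    push_cast
    field_simp
    ring

theorem tsum_solutionCoeff_mul_pow {α : ℝ} (hα : 2 * α - 1 ≠ 0) (A B y : ℝ) :
    ∑' n, solutionCoeff α A B n * y ^ n =
      A * (y * M (α / (2 * α - 1)) (3 / 2) (y ^ 2 * (2 * α - 1) / 2)) +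
        B * M (α / (2 * α - 1) - 1 / 2) (1 / 2) (y ^ 2 * (2 * α - 1) / 2) := by
  have hs := summable_mul_pow
    (summable_abs_mul_pow_of_recurrence (solutionCoeff_recurrence hα A B)) y
  have hodd : (fun k : ℕ => 2 * k + 1).Injective :=
    (add_left_injective 1).comp (mul_right_injective₀ two_ne_zero)
  rw [← tsum_even_add_odd (f := fun n => solutionCoeff α A B n * y ^ n)
      (hs.comp_injective (mul_right_injective₀ two_ne_zero))
      (hs.comp_injective hodd), M_eq_tsum_kummerCoeff_mul_pow, M_eq_tsum_kummerCoeff_mul_pow,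
    ← tsum_mul_left, ← tsum_mul_left, ← tsum_mul_left, add_comm]
  congr 1 <;> refine tsum_congr fun k => ?_
  · rw [solutionCoeff_two_mul_add_one, mul_div_assoc, mul_pow, pow_succ, pow_mul]; ring
  · rw [solutionCoeff_two_mul, mul_div_assoc, mul_pow, pow_mul]; ring

theorem stmt_1_general (α : ℝ) (hα' : α < 1 / 2) (C : ℝ) :
    ContDiff ℝ 2 (fun y => C * F α y) ∧
    ∀ y : ℝ,
      deriv (deriv (fun y => C * F α y)) y - (2 * α - 1) * y * deriv (fun y => C * F α y) y -
        C * F α y = 0 := by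
  have hα : 2 * α - 1 ≠ 0 := by linarith
  obtain ⟨K, hK⟩ : ∃ K, F α = fun y =>
      y * M (α / (2 * α - 1)) (3 / 2) (y ^ 2 * (2 * α - 1) / 2) +
        K * M (α / (2 * α - 1) - 1 / 2) (1 / 2) (y ^ 2 * (2 * α - 1) / 2) := ⟨_, rfl⟩
  have hrec := solutionCoeff_recurrence hα C (C * K)
  have hF : (fun y => C * F α y) = fun y => ∑' n, solutionCoeff α C (C * K) n * y ^ n :=
    funext fun y => by rw [hK, tsum_solutionCoeff_mul_pow hα]; ring
  refine ⟨hF ▸ contDiff_tsum_mul_pow (summable_abs_mul_pow_of_recurrence hrec) 2, fun y => ?_⟩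
  rw [hF, congrFun hF y]
  exact tsum_mul_pow_ode hrec y

theorem stmt_1 (α : ℝ) (hα : 0 < α) (hα' : α < 1 / 2) (C : ℝ) :
    ContDiff ℝ 2 (fun y => C * F α y) ∧
    ∀ y : ℝ,
      deriv (deriv (fun y => C * F α y)) y - (2 * α - 1) * y * deriv (fun y => C * F α y) y -
        C * F α y = 0 :=
  stmt_1_general α hα' C
end

section
/- Let 0 < α < 1/2, set γ(α) = α/(2α−1) and z(y,α) = y²(2α−1)/2, and let F(y,α) = y·M(γ(α), 3/2, z(y,α)) + [Γ(1−γ(α)) / (√(2(1−2α))·Γ(3/2−γ(α)))]·M(γ(α)−1/2, 1/2, z(y,α)). Then F(y,α) → 0 as y → −∞. -/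
/-!
By Kummer's transformation `M(a, b, z) = eᶻ M(b - a, b, -z)`, `F(y, α)` is `e^{z(y, α)}` times a
combination of `M(1 - γ, 1/2, -z)` and `M(3/2 - γ, 3/2, -z)`. With `c = √(1 - 2α) y`, so that
`-z = c²/2`, this combination is the parabolic-cylinder-type integral
`∫₀^∞ t^{1-2γ} e^{-t²/2} e^{ct} dt`, up to a positive factor: expanding `e^{ct}` and integrating
termwise, the even and odd moments of the half-Gaussian produce the two series, and the ratio of the
first two moments is exactly the Gamma-function constant in `F`. For `y ≤ 0` we have `c ≤ 0`, so the
integral lies between `0` and its value at `c = 0`, whence `|F(y, α)| ≤ C e^{z(y, α)} → 0`.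
-/

open Real Filter Polynomial

open Finset MeasureTheory Set
open scoped Nat

lemma ascPochhammer_eval_mul_eval_add {R : Type*} [CommSemiring R] (x : R) (k m : ℕ) :
    (ascPochhammer R k).eval x * (ascPochhammer R m).eval (x + k) =
      (ascPochhammer R (k + m)).eval x := by
  rw [← ascPochhammer_mul]; simp [eval_comp]

section Pochhammer

variable {R : Type*} [CommRing R]

lemma descPochhammer_eval_add (x y : R) (n : ℕ) :
    (descPochhammer R n).eval (x + y) = ∑ k ∈ range (n + 1),
      (n.choose k : R) * ((descPochhammer R k).eval x * (descPochhammer R (n - k)).eval y) := by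
  have hsmeval (m : ℕ) (r : R) : (descPochhammer ℤ m).smeval r = (descPochhammer R m).eval r := by
    rw [← aeval_eq_smeval, aeval_def, ← eval_map, descPochhammer_map]
  simp only [← hsmeval, Ring.descPochhammer_smeval_add n (Commute.all x y),
    Nat.sum_antidiagonal_eq_sum_range_succ (fun i j => (n.choose i : R) *
      ((descPochhammer ℤ i).smeval x * (descPochhammer ℤ j).smeval y))]

lemma neg_one_pow_mul_ascPochhammer_eval (c : R) (k : ℕ) :
    (-1) ^ k * (ascPochhammer R k).eval c = (descPochhammer R k).eval (-c) := by
  rw [← neg_neg c, ascPochhammer_eval_neg_eq_descPochhammer, neg_neg, ← mul_assoc, ← mul_pow]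
  simp

-- Chu–Vandermonde for falling factorials, after `(-1)ᵏ (c)⁽ᵏ⁾ = (-c)₍ₖ₎` and
-- `(b + k)⁽ⁿ⁻ᵏ⁾ = (b + n - 1)₍ₙ₋ₖ₎`.
lemma sum_choose_mul_ascPochhammer_eval (b c : R) (n : ℕ) :
    ∑ k ∈ range (n + 1), (n.choose k : R) * ((-1) ^ k * (ascPochhammer R k).eval c) *
      (ascPochhammer R (n - k)).eval (b + k) = (ascPochhammer R n).eval (b - c) := by
  rw [show b - c = -c + (b + n - 1) - n + 1 by ring, ← descPochhammer_eval_eq_ascPochhammer,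
    descPochhammer_eval_add]
  refine sum_congr rfl fun k hk => ?_
  rw [neg_one_pow_mul_ascPochhammer_eval, descPochhammer_eval_eq_ascPochhammer (R := R) (b + n - 1),
    Nat.cast_sub (Nat.lt_succ_iff.mp (mem_range.mp hk))]
  ring_nf

end Pochhammer

lemma factorial_two_mul_eq_ascPochhammer (m : ℕ) :
    ((2 * m)! : ℝ) = 4 ^ m * m ! * (ascPochhammer ℝ m).eval (1 / 2) := by
  induction m with
  | zero => simp
  | succ m ih =>
    rw [show 2 * (m + 1) = 2 * m + 1 + 1 by ring, Nat.factorial_succ, Nat.factorial_succ,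
      Nat.factorial_succ, ascPochhammer_succ_eval]
    push_cast
    rw [ih]
    ring

lemma factorial_two_mul_add_one_eq_ascPochhammer (m : ℕ) :
    ((2 * m + 1)! : ℝ) = 4 ^ m * m ! * (ascPochhammer ℝ m).eval (3 / 2) := by
  induction m with
  | zero => simp
  | succ m ih =>
    rw [show 2 * (m + 1) + 1 = 2 * m + 1 + 1 + 1 by ring, Nat.factorial_succ (2 * m + 1 + 1),
      Nat.factorial_succ (2 * m + 1), Nat.factorial_succ m, ascPochhammer_succ_eval]
    push_cast
    rw [ih]
    ring

lemma Real.Gamma_add_nat_eq_mul_ascPochhammer {x : ℝ} (hx : ∀ k : ℕ, x + k ≠ 0) (n : ℕ) :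
    Gamma (x + n) = Gamma x * (ascPochhammer ℝ n).eval x := by
  induction n with
  | zero => simp
  | succ n ih =>
    rw [Nat.cast_succ, ← add_assoc, Real.Gamma_add_one (hx n), ih, ascPochhammer_succ_eval]
    ring

noncomputable def MTerm (a β z : ℝ) (n : ℕ) : ℝ :=
  (ascPochhammer ℝ n).eval a * z ^ n / ((ascPochhammer ℝ n).eval β * n !)

lemma M_eq_tsum_MTerm (a β z : ℝ) : M a β z = ∑' n, MTerm a β z n := rfl

lemma MTerm_succ (a z : ℝ) {β : ℝ} (hβ : 0 < β) (n : ℕ) :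
    MTerm a β z (n + 1) = MTerm a β z n * ((a + n) * z / ((β + n) * (n + 1))) := by
  have := ascPochhammer_pos n β hβ
  simp only [MTerm, ascPochhammer_succ_eval, pow_succ, Nat.factorial_succ, Nat.cast_mul]
  field_simp
  push_cast
  ring

lemma summable_norm_MTerm (a z : ℝ) {β : ℝ} (hβ : 0 < β) :
    Summable fun n => ‖MTerm a β z n‖ := by
  set K := (|a| / β + 1) * |z|
  refine summable_of_ratio_norm_eventually_le (r := 1 / 2) (by norm_num) ?_
  filter_upwards [eventually_ge_atTop ⌈2 * K⌉₊] with n hn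
  have hK : 2 * K < n + 1 := (Nat.ceil_le.mp hn).trans_lt (lt_add_one _)
  have hnum : |a + n| ≤ (|a| / β + 1) * (β + n) := by
    have : |a| ≤ |a| / β * (β + n) := by
      rw [div_mul_eq_mul_div, le_div_iff₀ hβ]; nlinarith [abs_nonneg a, n.cast_nonneg (α := ℝ)]
    calc |a + n| ≤ |a| + n := by simpa using abs_add_le a n
      _ ≤ _ := by nlinarith
  have hratio : ‖(a + n) * z / ((β + n) * (n + 1))‖ ≤ 1 / 2 := by
    rw [Real.norm_eq_abs, abs_div, abs_mul,
      abs_of_pos (by positivity : (0:ℝ) < (β + n) * (n + 1)), div_le_iff₀ (by positivity)]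
    nlinarith [abs_nonneg z]
  rw [norm_norm, norm_norm, MTerm_succ a z hβ, norm_mul, mul_comm]
  exact mul_le_mul_of_nonneg_right hratio (norm_nonneg _)

lemma sum_range_MTerm_mul_pow_div_factorial (a z : ℝ) {β : ℝ} (hβ : 0 < β) (n : ℕ) :
    ∑ k ∈ range (n + 1), MTerm (β - a) β (-z) k * (z ^ (n - k) / (n - k)!) = MTerm a β z n := by
  have hterm : ∀ k ∈ range (n + 1), MTerm (β - a) β (-z) k * (z ^ (n - k) / (n - k)!) =
      (n.choose k * ((-1) ^ k * (ascPochhammer ℝ k).eval (β - a)) *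
        (ascPochhammer ℝ (n - k)).eval (β + k)) * (z ^ n / ((ascPochhammer ℝ n).eval β * n !)) := by
    intro k hk
    obtain ⟨m, rfl⟩ := Nat.exists_eq_add_of_le (Nat.lt_succ_iff.mp (mem_range.mp hk))
    have h1 := ascPochhammer_pos k β hβ
    have h2 := ascPochhammer_pos m (β + k) (by positivity)
    have h3 : ((k + m).choose k : ℝ) ≠ 0 := mod_cast (Nat.choose_pos (k.le_add_right m)).ne'
    rw [Nat.add_sub_cancel_left, ← ascPochhammer_eval_mul_eval_add,
      ← Nat.choose_mul_factorial_mul_factorial (Nat.le_add_right k m), Nat.add_sub_cancel_left,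
      MTerm, neg_pow, pow_add]
    push_cast
    field_simp
  rw [sum_congr rfl hterm, ← sum_mul, sum_choose_mul_ascPochhammer_eval, sub_sub_cancel, MTerm]
  ring

-- Kummer's transformation.
theorem M_eq_exp_mul_M (a z : ℝ) {β : ℝ} (hβ : 0 < β) :
    M a β z = exp z * M (β - a) β (-z) := by
  have hexp : Summable fun n => ‖z ^ n / (n ! : ℝ)‖ := by
    simpa [norm_div, norm_pow] using Real.summable_pow_div_factorial |z|
  rw [mul_comm, M_eq_tsum_MTerm, M_eq_tsum_MTerm, Real.exp_eq_exp_ℝ, NormedSpace.exp_eq_tsum_div,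
    tsum_mul_tsum_eq_tsum_sum_range_of_summable_norm (summable_norm_MTerm _ _ hβ) hexp]
  exact tsum_congr fun n => (sum_range_MTerm_mul_pow_div_factorial a z hβ n).symm

noncomputable def gaussMoment (s : ℝ) : ℝ := ∫ t in Ioi 0, t ^ s * exp (-(t ^ 2 / 2))

lemma gaussMoment_eq {s : ℝ} (hs : -1 < s) :
    gaussMoment s = 2 ^ ((s - 1) / 2) * Gamma ((s + 1) / 2) := by
  have h := integral_rpow_mul_exp_neg_mul_rpow two_pos hs one_half_pos
  simp only [Real.rpow_two, neg_mul, one_div, Real.inv_rpow zero_le_two] at h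
  rw [gaussMoment]
  convert h using 1
  · simp_rw [div_eq_inv_mul]
  · rw [← Real.rpow_neg zero_le_two, show (s - 1) / 2 = -(-(s + 1) / 2) + -1 by ring,
      Real.rpow_add two_pos, Real.rpow_neg_one]

lemma gaussMoment_pos {s : ℝ} (hs : -1 < s) : 0 < gaussMoment s := by
  rw [gaussMoment_eq hs]
  have := Real.Gamma_pos_of_pos (by linarith : 0 < (s + 1) / 2)
  positivity

lemma gaussMoment_add_two_mul {s : ℝ} (hs : -1 < s) (m : ℕ) :
    gaussMoment (s + 2 * m) = 2 ^ m * (ascPochhammer ℝ m).eval ((s + 1) / 2) * gaussMoment s := by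
  have hs' : 0 < (s + 1) / 2 := by linarith
  rw [gaussMoment_eq hs, gaussMoment_eq (by linarith [m.cast_nonneg (α := ℝ)]),
    show (s + 2 * m + 1) / 2 = (s + 1) / 2 + m by ring,
    Real.Gamma_add_nat_eq_mul_ascPochhammer (fun k => by positivity),
    show (s + 2 * m - 1) / 2 = (s - 1) / 2 + m by ring, Real.rpow_add two_pos, Real.rpow_natCast]
  ring

lemma gaussMoment_div_gaussMoment_add_one {s : ℝ} (hs : -1 < s) :
    gaussMoment s / gaussMoment (s + 1) = Gamma ((s + 1) / 2) / (√2 * Gamma ((s + 2) / 2)) := by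
  rw [gaussMoment_eq hs, gaussMoment_eq (by linarith),
    show (s + 1 - 1) / 2 = (s - 1) / 2 + 1 / 2 by ring,
    show (s + 1 + 1) / 2 = (s + 2) / 2 by ring, Real.rpow_add two_pos, ← Real.sqrt_eq_rpow]
  have := Real.rpow_pos_of_pos two_pos ((s - 1) / 2)
  field_simp

lemma integrableOn_rpow_mul_exp_neg_sq_div_two_mul_exp {s : ℝ} (hs : -1 < s) (c : ℝ) :
    IntegrableOn (fun t => t ^ s * exp (-(t ^ 2 / 2)) * exp (c * t)) (Ioi 0) := by
  refine ((integrableOn_rpow_mul_exp_neg_mul_sq (by norm_num : (0:ℝ) < 1 / 4) hs).const_mul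
    (exp (c ^ 2))).mono' (by fun_prop) ?_
  filter_upwards [ae_restrict_mem measurableSet_Ioi] with t ht
  -- `c t - t²/2 ≤ c² - t²/4` is `(c - t/2)² ≥ 0`.
  have hexp : exp (-(t ^ 2 / 2)) * exp (c * t) ≤ exp (c ^ 2) * exp (-(1 / 4) * t ^ 2) := by
    rw [← Real.exp_add, ← Real.exp_add, Real.exp_le_exp]
    nlinarith [sq_nonneg (c - t / 2)]
  have hts : 0 ≤ t ^ s := Real.rpow_nonneg (le_of_lt ht) s
  rw [norm_of_nonneg (by positivity)]
  linarith [mul_le_mul_of_nonneg_left hexp hts]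

lemma hasSum_pow_div_factorial_mul_gaussMoment {s : ℝ} (hs : -1 < s) (c : ℝ) :
    HasSum (fun n : ℕ => c ^ n / n ! * gaussMoment (s + n))
      (∫ t in Ioi 0, t ^ s * exp (-(t ^ 2 / 2)) * exp (c * t)) := by
  set g : ℝ → ℝ := fun t => t ^ s * exp (-(t ^ 2 / 2))
  have hterm (n : ℕ) : ∀ t ∈ Ioi (0:ℝ),
      g t * ((c * t) ^ n / n !) = c ^ n / n ! * (t ^ (s + n) * exp (-(t ^ 2 / 2))) := by
    intro t ht
    rw [Real.rpow_add ht, Real.rpow_natCast, mul_pow]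
    ring
  have hexp (b t : ℝ) : HasSum (fun n : ℕ => g t * ((b * t) ^ n / n !)) (g t * exp (b * t)) := by
    rw [Real.exp_eq_exp_ℝ]
    exact (NormedSpace.expSeries_div_hasSum_exp (b * t)).mul_left _
  have hdom := hasSum_integral_of_dominated_convergence (μ := volume.restrict (Ioi 0))
    (F := fun n t => g t * ((c * t) ^ n / n !)) (fun n t => g t * ((|c| * t) ^ n / n !))
    (fun n => by fun_prop) (fun n => ?_) (Eventually.of_forall fun t => (hexp |c| t).summable)
    ?_ (Eventually.of_forall fun t => hexp c t)
  · refine hdom.congr_fun fun n => ?_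
    rw [setIntegral_congr_fun measurableSet_Ioi (hterm n), integral_const_mul]
    rfl
  · filter_upwards [ae_restrict_mem measurableSet_Ioi] with t ht
    have hg : 0 ≤ g t := by have := Real.rpow_nonneg (le_of_lt ht) s; positivity
    rw [norm_mul, norm_of_nonneg hg, norm_div, norm_pow, norm_mul, Real.norm_eq_abs,
      Real.norm_eq_abs, abs_of_pos (a := t) ht, Real.norm_natCast]
  · simp_rw [fun t => (hexp |c| t).tsum_eq]
    exact integrableOn_rpow_mul_exp_neg_sq_div_two_mul_exp hs |c|

theorem integral_rpow_mul_exp_neg_sq_div_two_mul_exp {s : ℝ} (hs : -1 < s) (c : ℝ) :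
    ∫ t in Ioi 0, t ^ s * exp (-(t ^ 2 / 2)) * exp (c * t) =
      gaussMoment s * M ((s + 1) / 2) (1 / 2) (c ^ 2 / 2) +
        c * gaussMoment (s + 1) * M ((s + 2) / 2) (3 / 2) (c ^ 2 / 2) := by
  have hs1 : -1 < s + 1 := by linarith
  have habs : Summable fun n : ℕ => ‖c ^ n / n ! * gaussMoment (s + n)‖ := by
    refine (hasSum_pow_div_factorial_mul_gaussMoment hs |c|).summable.congr fun n => ?_
    rw [norm_mul, norm_div, norm_pow, Real.norm_natCast, Real.norm_eq_abs,
      norm_of_nonneg (gaussMoment_pos (by linarith [n.cast_nonneg (α := ℝ)])).le]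
  have heven (m : ℕ) : c ^ (2 * m) / (2 * m)! * gaussMoment (s + (2 * m : ℕ)) =
      gaussMoment s * MTerm ((s + 1) / 2) (1 / 2) (c ^ 2 / 2) m := by
    have := ascPochhammer_pos m (1 / 2 : ℝ) one_half_pos
    rw [Nat.cast_mul, Nat.cast_two, gaussMoment_add_two_mul hs, factorial_two_mul_eq_ascPochhammer,
      MTerm, pow_mul, div_pow, show (4 : ℝ) ^ m = 2 ^ m * 2 ^ m by rw [← mul_pow]; norm_num]
    field_simp
  have hodd (m : ℕ) : c ^ (2 * m + 1) / (2 * m + 1)! * gaussMoment (s + (2 * m + 1 : ℕ)) =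
      c * gaussMoment (s + 1) * MTerm ((s + 2) / 2) (3 / 2) (c ^ 2 / 2) m := by
    have := ascPochhammer_pos m (3 / 2 : ℝ) (by norm_num)
    rw [show s + ((2 * m + 1 : ℕ) : ℝ) = s + 1 + 2 * m by push_cast; ring,
      gaussMoment_add_two_mul hs1, factorial_two_mul_add_one_eq_ascPochhammer, MTerm, pow_succ,
      pow_mul, div_pow, show (s + 1 + 1) / 2 = (s + 2) / 2 by ring,
      show (4 : ℝ) ^ m = 2 ^ m * 2 ^ m by rw [← mul_pow]; norm_num]
    field_simp
  set f : ℕ → ℝ := fun n => c ^ n / n ! * gaussMoment (s + n)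
  have hsum_even : Summable fun m => f (2 * m) :=
    habs.of_norm.comp_injective (mul_right_injective₀ two_ne_zero)
  have hsum_odd : Summable fun m => f (2 * m + 1) :=
    habs.of_norm.comp_injective ((add_left_injective 1).comp (mul_right_injective₀ two_ne_zero))
  rw [← (hasSum_pow_div_factorial_mul_gaussMoment hs c).tsum_eq,
    ← tsum_even_add_odd hsum_even hsum_odd,
    M_eq_tsum_MTerm, M_eq_tsum_MTerm, ← tsum_mul_left, ← tsum_mul_left]
  exact congrArg₂ _ (tsum_congr heven) (tsum_congr hodd)

lemma norm_integral_rpow_mul_exp_neg_sq_div_two_mul_exp_le {s : ℝ} (hs : -1 < s) {c : ℝ}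
    (hc : c ≤ 0) : ‖∫ t in Ioi 0, t ^ s * exp (-(t ^ 2 / 2)) * exp (c * t)‖ ≤ gaussMoment s := by
  have hint : IntegrableOn (fun t => t ^ s * exp (-(t ^ 2 / 2))) (Ioi 0) := by
    simpa using integrableOn_rpow_mul_exp_neg_sq_div_two_mul_exp hs 0
  refine norm_integral_le_of_norm_le hint ?_
  filter_upwards [ae_restrict_mem measurableSet_Ioi] with t ht
  have hts : 0 ≤ t ^ s := Real.rpow_nonneg (le_of_lt ht) s
  have hexp : exp (c * t) ≤ 1 :=
    Real.exp_le_one_iff.mpr (mul_nonpos_of_nonpos_of_nonneg hc (le_of_lt ht))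
  rw [norm_of_nonneg (by positivity)]
  exact mul_le_of_le_one_right (by positivity) hexp

theorem exp_mul_integral_rpow_mul_exp_neg_sq_div_two_mul_exp {γ : ℝ} (hγ : γ < 1) (c : ℝ) :
    exp (-(c ^ 2 / 2)) * ∫ t in Ioi 0, t ^ (1 - 2 * γ) * exp (-(t ^ 2 / 2)) * exp (c * t) =
      gaussMoment (1 - 2 * γ) * M (γ - 1 / 2) (1 / 2) (-(c ^ 2 / 2)) +
        c * gaussMoment (2 - 2 * γ) * M γ (3 / 2) (-(c ^ 2 / 2)) := by
  rw [integral_rpow_mul_exp_neg_sq_div_two_mul_exp (by linarith),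
    M_eq_exp_mul_M _ _ one_half_pos, M_eq_exp_mul_M _ _ (by norm_num : (0 : ℝ) < 3 / 2),
    show 1 / 2 - (1 - 2 * γ + 1) / 2 = γ - 1 / 2 by ring, show 3 / 2 - (1 - 2 * γ + 2) / 2 = γ by ring,
    show 1 - 2 * γ + 1 = 2 - 2 * γ by ring, Real.exp_neg]
  field_simp

theorem M_combination_eq_integral {γ l : ℝ} (hγ : γ < 1) (hl : 0 < l) (y : ℝ) :
    y * M γ (3 / 2) (-((l * y) ^ 2 / 2)) +
        Gamma (1 - γ) / (√2 * l * Gamma (3 / 2 - γ)) * M (γ - 1 / 2) (1 / 2) (-((l * y) ^ 2 / 2)) =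
      exp (-((l * y) ^ 2 / 2)) *
          (∫ t in Ioi 0, t ^ (1 - 2 * γ) * exp (-(t ^ 2 / 2)) * exp (l * y * t)) /
        (l * gaussMoment (2 - 2 * γ)) := by
  have hG₁ : 0 < gaussMoment (2 - 2 * γ) := gaussMoment_pos (by linarith)
  have hratio := gaussMoment_div_gaussMoment_add_one (s := 1 - 2 * γ) (by linarith)
  rw [show (1 - 2 * γ + 1) / 2 = 1 - γ by ring, show 1 - 2 * γ + 1 = 2 - 2 * γ by ring,
    show (1 - 2 * γ + 2) / 2 = 3 / 2 - γ by ring] at hratio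
  rw [mul_right_comm, ← div_div, ← hratio,
    exp_mul_integral_rpow_mul_exp_neg_sq_div_two_mul_exp hγ]
  -- otherwise `field_simp` rewrites `2 - 2 * γ` inside `gaussMoment` and loses `hG₁`
  generalize gaussMoment (2 - 2 * γ) = G₁ at hG₁ ⊢
  field_simp
  ring

theorem stmt_2 (α : ℝ) (hα : 0 < α) (hα' : α < 1 / 2) :
    Tendsto (fun y => F α y) atBot (nhds 0) := by
  set γ := α / (2 * α - 1) with hγ_def
  have hγ : γ < 1 := (div_neg_of_pos_of_neg hα (by linarith)).trans one_pos
  set l := √(1 - 2 * α)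
  have hl : 0 < l := Real.sqrt_pos.mpr (by linarith)
  have hz (y : ℝ) : y ^ 2 * (2 * α - 1) / 2 = -((l * y) ^ 2 / 2) := by
    rw [mul_pow, Real.sq_sqrt (by linarith)]; ring
  have hbound : ∀ᶠ y in atBot, ‖F α y‖ ≤
      exp (y ^ 2 * (2 * α - 1) / 2) * gaussMoment (1 - 2 * γ) / (l * gaussMoment (2 - 2 * γ)) := by
    filter_upwards [eventually_le_atBot 0] with y hy
    have hG₁ : 0 < gaussMoment (2 - 2 * γ) := gaussMoment_pos (by linarith)
    rw [F, ← hγ_def, Real.sqrt_mul zero_le_two, hz, M_combination_eq_integral hγ hl, norm_div,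
      norm_mul, Real.norm_eq_abs (exp _), Real.abs_exp,
      norm_of_nonneg (by positivity : 0 ≤ l * gaussMoment (2 - 2 * γ))]
    gcongr
    exact norm_integral_rpow_mul_exp_neg_sq_div_two_mul_exp_le (s := 1 - 2 * γ) (by linarith)
      (mul_nonpos_of_nonneg_of_nonpos hl.le hy)
  have hlim : Tendsto (fun y => exp (y ^ 2 * (2 * α - 1) / 2)) atBot (nhds 0) := by
    have hsq : Tendsto (fun y : ℝ => y ^ 2) atBot atTop := by
      simpa [sq] using tendsto_id.atBot_mul_atBot₀ tendsto_id
    simp_rw [mul_div_assoc]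
    exact Real.tendsto_exp_atBot.comp (hsq.atTop_mul_const_of_neg (by linarith))
  exact squeeze_zero_norm' hbound (by simpa using (hlim.mul_const _).div_const _)
end

section
/- Let α ≥ 0 with α ≠ 1/2, set γ(α) = α/(2α−1) and z(y,α) = y²(2α−1)/2. If g : ℝ → ℝ is twice continuously differentiable and satisfies Kummer's differential equation z·g''(z) + (3/2 − z)·g'(z) − γ(α)·g(z) = 0 for every z in the range of y ↦ z(y,α), then the function f(y) = |y|·g(z(y,α)) satisfies f''(y) − (2α−1) y f'(y) − f(y) = 0 for all y ≠ 0. -/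
/-!
Write `c = 2α - 1` and `u = y²c/2`. Near any `y ≠ 0` the factor `|x|` equals `sign y · x`, and the
operator `f ↦ f'' - c y f' - f` is linear, so it suffices to treat `h(y) = y · g(u)`. The chain rule
gives `h'' - c y h' - h = y (2c (u g''(u) + (3/2 - u) g'(u)) - (c + 1) g(u))`, which is `2cy` times
Kummer's expression because `(c + 1) / (2c) = α / (2α - 1)`.
-/

open Real Filter Topology

noncomputable def hermiteOp (c : ℝ) (f : ℝ → ℝ) (y : ℝ) : ℝ :=
  deriv (deriv f) y - c * y * deriv f y - f y

theorem eventually_sign_eq {y : ℝ} (hy : y ≠ 0) : ∀ᶠ x in 𝓝 y, SignType.sign x = SignType.sign y :=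
  continuousAt_sign_of_ne_zero hy ((isOpen_discrete {SignType.sign y}).mem_nhds rfl)

theorem abs_mul_eventuallyEq_sign_mul (φ : ℝ → ℝ) {y : ℝ} (hy : y ≠ 0) :
    (fun x => |x| * φ x) =ᶠ[𝓝 y] fun x => (SignType.sign y : ℝ) * (x * φ x) := by
  filter_upwards [eventually_sign_eq hy] with x hx
  rw [← hx, ← mul_assoc, sign_mul_self]

theorem hermiteOp_congr {c : ℝ} {f h : ℝ → ℝ} {y : ℝ} (hfh : f =ᶠ[𝓝 y] h) :
    hermiteOp c f y = hermiteOp c h y := by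
  simp only [hermiteOp, hfh.deriv.deriv_eq, hfh.deriv_eq, hfh.eq_of_nhds]

theorem hermiteOp_const_mul (c a : ℝ) (f : ℝ → ℝ) (y : ℝ) :
    hermiteOp c (fun x => a * f x) y = a * hermiteOp c f y := by
  simp only [hermiteOp, deriv_const_mul_field']
  ring

theorem hermiteOp_abs_mul (c : ℝ) (φ : ℝ → ℝ) {y : ℝ} (hy : y ≠ 0) :
    hermiteOp c (fun x => |x| * φ x) y = SignType.sign y * hermiteOp c (fun x => x * φ x) y := by
  rw [hermiteOp_congr (abs_mul_eventuallyEq_sign_mul φ hy), hermiteOp_const_mul]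

theorem hasDerivAt_sq_mul_div_two (c y : ℝ) :
    HasDerivAt (fun y : ℝ => y ^ 2 * c / 2) (c * y) y :=
  (((hasDerivAt_pow 2 y).mul_const c).div_const 2).congr_deriv (by ring)

section
variable {c : ℝ} {g : ℝ → ℝ}

theorem hasDerivAt_mul_comp_sq (hg : Differentiable ℝ g) (y : ℝ) :
    HasDerivAt (fun y => y * g (y ^ 2 * c / 2))
      (g (y ^ 2 * c / 2) + c * y ^ 2 * deriv g (y ^ 2 * c / 2)) y :=
  ((hasDerivAt_id' y).mul ((hg _).hasDerivAt.comp y (hasDerivAt_sq_mul_div_two c y))).congr_deriv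
    (by simp only [Function.comp_apply]; ring)

theorem deriv_mul_comp_sq (hg : Differentiable ℝ g) :
    deriv (fun y => y * g (y ^ 2 * c / 2)) =
      fun y => g (y ^ 2 * c / 2) + c * y ^ 2 * deriv g (y ^ 2 * c / 2) :=
  funext fun y => (hasDerivAt_mul_comp_sq hg y).deriv

theorem hasDerivAt_deriv_mul_comp_sq (hg : ContDiff ℝ 2 g) (y : ℝ) :
    HasDerivAt (deriv fun y => y * g (y ^ 2 * c / 2))
      (3 * c * y * deriv g (y ^ 2 * c / 2) + c ^ 2 * y ^ 3 * deriv (deriv g) (y ^ 2 * c / 2)) y := by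
  have hg₁ := hg.differentiable two_ne_zero
  have hg₂ := (hg.deriv' (n := 1)).differentiable one_ne_zero
  rw [deriv_mul_comp_sq hg₁]
  have hu := hasDerivAt_sq_mul_div_two c y
  have hsq : HasDerivAt (fun y : ℝ => c * y ^ 2) (c * (2 * y)) y :=
    ((hasDerivAt_pow 2 y).const_mul c).congr_deriv (by ring)
  exact (((hg₁ _).hasDerivAt.comp y hu).add (hsq.mul ((hg₂ _).hasDerivAt.comp y hu))).congr_deriv
    (by simp only [Function.comp_apply]; ring)

theorem hermiteOp_mul_comp_sq (hg : ContDiff ℝ 2 g) (y : ℝ) :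
    hermiteOp c (fun y => y * g (y ^ 2 * c / 2)) y =
      y * (2 * c * (y ^ 2 * c / 2 * deriv (deriv g) (y ^ 2 * c / 2) +
        (3 / 2 - y ^ 2 * c / 2) * deriv g (y ^ 2 * c / 2)) - (c + 1) * g (y ^ 2 * c / 2)) := by
  rw [hermiteOp, (hasDerivAt_deriv_mul_comp_sq hg y).deriv,
    deriv_mul_comp_sq (hg.differentiable two_ne_zero)]
  ring

end

theorem stmt_6_general (α : ℝ) (hα' : α ≠ 1 / 2) (g : ℝ → ℝ)
    (hg : ContDiff ℝ 2 g)
    (hKummer : ∀ z ∈ Set.range (fun y : ℝ => y ^ 2 * (2 * α - 1) / 2),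
      z * deriv (deriv g) z + (3 / 2 - z) * deriv g z - (α / (2 * α - 1)) * g z = 0) :
    ∀ y : ℝ, y ≠ 0 →
      deriv (deriv (fun y : ℝ => |y| * g (y ^ 2 * (2 * α - 1) / 2))) y -
        (2 * α - 1) * y * deriv (fun y : ℝ => |y| * g (y ^ 2 * (2 * α - 1) / 2)) y -
        |y| * g (y ^ 2 * (2 * α - 1) / 2) = 0 := by
  intro y hy
  have hc : 2 * α - 1 ≠ 0 := fun h => hα' (by linarith)
  have hK := hKummer _ ⟨y, rfl⟩
  change hermiteOp (2 * α - 1) (fun x => |x| * g (x ^ 2 * (2 * α - 1) / 2)) y = 0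
  rw [hermiteOp_abs_mul _ _ hy, hermiteOp_mul_comp_sq hg]
  field_simp at hK
  linear_combination (SignType.sign y : ℝ) * y * hK

theorem stmt_6 (α : ℝ) (hα : 0 ≤ α) (hα' : α ≠ 1 / 2) (g : ℝ → ℝ)
    (hg : ContDiff ℝ 2 g)
    (hKummer : ∀ z ∈ Set.range (fun y : ℝ => y ^ 2 * (2 * α - 1) / 2),
      z * deriv (deriv g) z + (3 / 2 - z) * deriv g z - (α / (2 * α - 1)) * g z = 0) :
    ∀ y : ℝ, y ≠ 0 →
      deriv (deriv (fun y : ℝ => |y| * g (y ^ 2 * (2 * α - 1) / 2))) y -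
        (2 * α - 1) * y * deriv (fun y : ℝ => |y| * g (y ^ 2 * (2 * α - 1) / 2)) y -
        |y| * g (y ^ 2 * (2 * α - 1) / 2) = 0 :=
  stmt_6_general α hα' g hg hKummer
end

section
/- Let α ≥ 0 and let f : ℝ → ℝ be twice continuously differentiable with f''(y) − (2α−1)·y·f'(y) − f(y) = 0 for all y ∈ ℝ. Define V(x,t) = √(1−t)·f(x/√(1−t)) for x ∈ ℝ and 0 ≤ t < 1. Then V satisfies the partial differential equation V_t(x,t) − (α·x/(1−t))·V_x(x,t) + (1/2)·V_{xx}(x,t) = 0 for all x ∈ ℝ and 0 ≤ t < 1, where V_t denotes the partial derivative in t, and V_x, V_{xx} denote the first and second partial derivatives in x. -/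
/-!
Write `s = √(1 - t)` and `y = x / s`. Since `V(·, t) = s · f(· / s)`, we get `V_x = f'(y)` and
`V_xx = f''(y) / s`, while differentiating `t ↦ s(t) f(x / s(t))` gives
`V_t = -(f(y) - y f'(y)) / (2s)`. Hence `2s (V_t - α x V_x / (1 - t) + V_xx / 2)` equals
`f''(y) - (2α - 1) y f'(y) - f(y)`, which vanishes by the ODE.
-/

open Real

section Scaling

variable {𝕜 : Type*} [NontriviallyNormedField 𝕜]

theorem deriv_const_mul_comp_div (c s : 𝕜) (f : 𝕜 → 𝕜) (x : 𝕜) :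
    deriv (fun y => c * f (y / s)) x = c / s * deriv f (x / s) := by
  simp only [div_eq_inv_mul]
  rw [deriv_const_mul_field, deriv_comp_mul_left, smul_eq_mul, mul_left_comm, mul_assoc]

theorem deriv_deriv_const_mul_comp_div (c s : 𝕜) (f : 𝕜 → 𝕜) (x : 𝕜) :
    deriv (deriv fun y => c * f (y / s)) x = c / s / s * deriv (deriv f) (x / s) := by
  rw [funext (deriv_const_mul_comp_div c s f), deriv_const_mul_comp_div]

theorem hasDerivAt_mul_comp_div_self {f g : 𝕜 → 𝕜} {g' x t : 𝕜} (hg : HasDerivAt g g' t)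
    (hgt : g t ≠ 0) (hf : DifferentiableAt 𝕜 f (x / g t)) :
    HasDerivAt (fun t => g t * f (x / g t))
      (g' * (f (x / g t) - x / g t * deriv f (x / g t))) t := by
  have hquot : HasDerivAt (fun t => x / g t) ((0 * g t - x * g') / g t ^ 2) t :=
    (hasDerivAt_const t x).div hg hgt
  refine (hg.mul (hf.hasDerivAt.comp t hquot)).congr_deriv ?_
  rw [Function.comp_apply]
  field_simp
  ring

end Scaling

theorem hasDerivAt_sqrt_one_sub {t : ℝ} (ht : t < 1) :
    HasDerivAt (fun t => √(1 - t)) (-1 / (2 * √(1 - t))) t := by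
  simpa using ((hasDerivAt_id t).const_sub 1).sqrt (sub_ne_zero.mpr ht.ne')

theorem stmt_19_general (α : ℝ) (f : ℝ → ℝ) (hf : ContDiff ℝ 2 f)
    (hODE : ∀ y : ℝ, deriv (deriv f) y - (2 * α - 1) * y * deriv f y - f y = 0) :
    ∀ x : ℝ, ∀ t : ℝ, 0 ≤ t → t < 1 →
      deriv (fun t' : ℝ => Real.sqrt (1 - t') * f (x / Real.sqrt (1 - t'))) t -
        α * x / (1 - t) *
          deriv (fun x' : ℝ => Real.sqrt (1 - t) * f (x' / Real.sqrt (1 - t))) x +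
        1 / 2 *
          deriv (deriv (fun x' : ℝ => Real.sqrt (1 - t) * f (x' / Real.sqrt (1 - t)))) x
        = 0 := by
  intro x t _ ht
  have hpos : 0 < 1 - t := sub_pos.mpr ht
  have hs : 0 < √(1 - t) := sqrt_pos.mpr hpos
  have hs_sq : √(1 - t) ^ 2 = 1 - t := sq_sqrt hpos.le
  rw [(hasDerivAt_mul_comp_div_self (hasDerivAt_sqrt_one_sub ht) hs.ne'
      (hf.differentiable two_ne_zero _)).deriv,
    deriv_const_mul_comp_div, deriv_deriv_const_mul_comp_div]
  generalize √(1 - t) = s at *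
  rw [← hs_sq]
  obtain ⟨y, rfl⟩ : ∃ y, x = y * s := ⟨x / s, by field_simp⟩
  rw [mul_div_cancel_right₀ y hs.ne']
  field_simp
  linear_combination hODE y

theorem stmt_19 (α : ℝ) (hα : 0 ≤ α) (f : ℝ → ℝ) (hf : ContDiff ℝ 2 f)
    (hODE : ∀ y : ℝ, deriv (deriv f) y - (2 * α - 1) * y * deriv f y - f y = 0) :
    ∀ x : ℝ, ∀ t : ℝ, 0 ≤ t → t < 1 →
      deriv (fun t' : ℝ => Real.sqrt (1 - t') * f (x / Real.sqrt (1 - t'))) t -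
        α * x / (1 - t) *
          deriv (fun x' : ℝ => Real.sqrt (1 - t) * f (x' / Real.sqrt (1 - t))) x +
        1 / 2 *
          deriv (deriv (fun x' : ℝ => Real.sqrt (1 - t) * f (x' / Real.sqrt (1 - t)))) x
        = 0 :=
  stmt_19_general α f hf hODE
end
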